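/- Let A₁, A₂, B₁, B₂, C₁, C₂ be convex sets in the plane such that A₁∩A₂∩B₁∩B₂, A₁∩A₂∩C₁∩C₂ and B₁∩B₂∩C₁∩C₂ are all nonempty, and such that A₁∩B₁∩C₁ = ∅ and A₂∩B₂∩C₂ = ∅, with all six sets pairwise intersecting. Then the orientation of the triple (A₁,B₁,C₁) equals the orientation of (A₂,B₂,C₂). -/

import Mathlib

/-!
If three convex sets `A, B, C` have empty common intersection, then for `x ∈ B ∩ C`,
`y ∈ A ∩ C`, `z ∈ A ∩ B` the points are never collinear: one of them would lie between the
other two, hence in all three sets. So `det2` does not vanish on the convex (hence connected)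
set `(B ∩ C) × (A ∩ C) × (A ∩ B)`, and its sign is constant there. For the two triples of the
theorem, the common points `x ∈ B₁ ∩ B₂ ∩ C₁ ∩ C₂`, `y ∈ A₁ ∩ A₂ ∩ C₁ ∩ C₂`,
`z ∈ A₁ ∩ A₂ ∩ B₁ ∩ B₂` are admissible for both, so both orientations equal `ptOrient x y z`.
-/

noncomputable def det2 (p q r : ℝ × ℝ) : ℝ :=
  (q.1 - p.1) * (r.2 - p.2) - (q.2 - p.2) * (r.1 - p.1)

noncomputable def ptOrient (p q r : ℝ × ℝ) : ℝ := Real.sign (det2 p q r)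

theorem Real.sign_eq_sign_of_isPreconnected {X : Type*} [TopologicalSpace X] {s : Set X}
    {f : X → ℝ} (hs : IsPreconnected s) (hf : ContinuousOn f s) (hf0 : ∀ p ∈ s, f p ≠ 0)
    {p q : X} (hp : p ∈ s) (hq : q ∈ s) : Real.sign (f p) = Real.sign (f q) := by
  have no_sign_change : ∀ a ∈ s, ∀ b ∈ s, f a < 0 → 0 < f b → False := by
    intro a ha b hb ha0 hb0
    obtain ⟨c, hc, hc0⟩ := hs.intermediate_value ha hb hf ⟨ha0.le, hb0.le⟩
    exact hf0 c hc hc0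
  rcases (hf0 p hp).lt_or_gt with hp0 | hp0 <;> rcases (hf0 q hq).lt_or_gt with hq0 | hq0
  · rw [Real.sign_of_neg hp0, Real.sign_of_neg hq0]
  · exact (no_sign_change p hp q hq hp0 hq0).elim
  · exact (no_sign_change q hq p hp hq0 hp0).elim
  · rw [Real.sign_of_pos hp0, Real.sign_of_pos hq0]

theorem collinear_of_det2_eq_zero {x y z : ℝ × ℝ} (h : det2 x y z = 0) :
    Collinear ℝ ({x, y, z} : Set (ℝ × ℝ)) := by
  rcases eq_or_ne x y with rfl | hxy
  · simpa using collinear_pair ℝ x z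
  have hn : 0 < (y.1 - x.1) ^ 2 + (y.2 - x.2) ^ 2 := by
    by_contra! hle
    exact hxy (Prod.ext (by nlinarith) (by nlinarith))
  -- `z - x` is its own orthogonal projection onto the line through `x` and `y`
  set r := ((y.1 - x.1) * (z.1 - x.1) + (y.2 - x.2) * (z.2 - x.2)) /
    ((y.1 - x.1) ^ 2 + (y.2 - x.2) ^ 2)
  have hz : AffineMap.lineMap x y r = z := by
    unfold det2 at h
    ext <;> simp only [AffineMap.lineMap_apply_module, Prod.fst_add, Prod.snd_add,
      Prod.smul_fst, Prod.smul_snd, smul_eq_mul, r] <;> field_simp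
    · linear_combination (y.2 - x.2) * h
    · linear_combination -(y.1 - x.1) * h
  have hcol : Collinear ℝ ({z, x, y} : Set (ℝ × ℝ)) :=
    collinear_insert_of_mem_affineSpan_pair (hz ▸ AffineMap.lineMap_mem_affineSpan_pair r x y)
  convert hcol using 1
  ext p
  simp only [Set.mem_insert_iff, Set.mem_singleton_iff]
  tauto

section EmptyTripleIntersection

variable {A B C : Set (ℝ × ℝ)} (hA : Convex ℝ A) (hB : Convex ℝ B) (hC : Convex ℝ C)
  (he : A ∩ B ∩ C = ∅)
include hA hB hC he

theorem det2_ne_zero_of_inter_eq_empty {x y z : ℝ × ℝ}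
    (hx : x ∈ B ∩ C) (hy : y ∈ A ∩ C) (hz : z ∈ A ∩ B) : det2 x y z ≠ 0 := by
  intro h
  rw [← Set.subset_empty_iff] at he
  rcases (collinear_of_det2_eq_zero h).wbtw_or_wbtw_or_wbtw with hxyz | hyzx | hzxy
  · exact he ⟨⟨hy.1, hB.segment_subset hx.1 hz.2 hxyz.mem_segment⟩, hy.2⟩
  · exact he ⟨hz, hC.segment_subset hy.2 hx.2 hyzx.mem_segment⟩
  · exact he ⟨⟨hA.segment_subset hz.1 hy.1 hzxy.mem_segment, hx.1⟩, hx.2⟩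

theorem ptOrient_eq_of_inter_eq_empty {x y z x' y' z' : ℝ × ℝ}
    (hx : x ∈ B ∩ C) (hy : y ∈ A ∩ C) (hz : z ∈ A ∩ B)
    (hx' : x' ∈ B ∩ C) (hy' : y' ∈ A ∩ C) (hz' : z' ∈ A ∩ B) :
    ptOrient x y z = ptOrient x' y' z' :=
  Real.sign_eq_sign_of_isPreconnected (f := fun p : (ℝ × ℝ) × (ℝ × ℝ) × (ℝ × ℝ) ↦
      det2 p.1 p.2.1 p.2.2) (p := (x, y, z)) (q := (x', y', z'))
    ((hB.inter hC).prod ((hA.inter hC).prod (hA.inter hB))).isPreconnected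
    (by unfold det2; fun_prop)
    (fun p hp ↦ det2_ne_zero_of_inter_eq_empty hA hB hC he hp.1 hp.2.1 hp.2.2)
    ⟨hx, hy, hz⟩ ⟨hx', hy', hz'⟩

end EmptyTripleIntersection

theorem stmt_8_general (A₁ A₂ B₁ B₂ C₁ C₂ : Set (ℝ × ℝ))
    (hconv : ∀ S ∈ [A₁, A₂, B₁, B₂, C₁, C₂], Convex ℝ S)
    (h1 : (A₁ ∩ A₂ ∩ B₁ ∩ B₂).Nonempty)
    (h2 : (A₁ ∩ A₂ ∩ C₁ ∩ C₂).Nonempty)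
    (h3 : (B₁ ∩ B₂ ∩ C₁ ∩ C₂).Nonempty)
    (e1 : A₁ ∩ B₁ ∩ C₁ = ∅) (e2 : A₂ ∩ B₂ ∩ C₂ = ∅) :
    ∀ x₁ ∈ B₁ ∩ C₁, ∀ y₁ ∈ A₁ ∩ C₁, ∀ z₁ ∈ A₁ ∩ B₁,
      ∀ x₂ ∈ B₂ ∩ C₂, ∀ y₂ ∈ A₂ ∩ C₂, ∀ z₂ ∈ A₂ ∩ B₂,
        ptOrient x₁ y₁ z₁ = ptOrient x₂ y₂ z₂ := by
  intro x₁ hx₁ y₁ hy₁ z₁ hz₁ x₂ hx₂ y₂ hy₂ z₂ hz₂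
  obtain ⟨z, ⟨⟨hzA₁, hzA₂⟩, hzB₁⟩, hzB₂⟩ := h1
  obtain ⟨y, ⟨⟨hyA₁, hyA₂⟩, hyC₁⟩, hyC₂⟩ := h2
  obtain ⟨x, ⟨⟨hxB₁, hxB₂⟩, hxC₁⟩, hxC₂⟩ := h3
  calc ptOrient x₁ y₁ z₁
      = ptOrient x y z :=
        ptOrient_eq_of_inter_eq_empty (hconv A₁ (by simp)) (hconv B₁ (by simp))
          (hconv C₁ (by simp)) e1 hx₁ hy₁ hz₁ ⟨hxB₁, hxC₁⟩ ⟨hyA₁, hyC₁⟩ ⟨hzA₁, hzB₁⟩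
    _ = ptOrient x₂ y₂ z₂ :=
        ptOrient_eq_of_inter_eq_empty (hconv A₂ (by simp)) (hconv B₂ (by simp))
          (hconv C₂ (by simp)) e2 ⟨hxB₂, hxC₂⟩ ⟨hyA₂, hyC₂⟩ ⟨hzA₂, hzB₂⟩ hx₂ hy₂ hz₂

theorem stmt_8 (A₁ A₂ B₁ B₂ C₁ C₂ : Set (ℝ × ℝ))
    (hcomp : ∀ S ∈ [A₁, A₂, B₁, B₂, C₁, C₂], IsCompact S)
    (hconv : ∀ S ∈ [A₁, A₂, B₁, B₂, C₁, C₂], Convex ℝ S)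
    (hpair : ∀ S ∈ [A₁, A₂, B₁, B₂, C₁, C₂], ∀ T ∈ [A₁, A₂, B₁, B₂, C₁, C₂],
      (S ∩ T).Nonempty)
    (h1 : (A₁ ∩ A₂ ∩ B₁ ∩ B₂).Nonempty)
    (h2 : (A₁ ∩ A₂ ∩ C₁ ∩ C₂).Nonempty)
    (h3 : (B₁ ∩ B₂ ∩ C₁ ∩ C₂).Nonempty)
    (e1 : A₁ ∩ B₁ ∩ C₁ = ∅) (e2 : A₂ ∩ B₂ ∩ C₂ = ∅) :
    ∀ x₁ ∈ B₁ ∩ C₁, ∀ y₁ ∈ A₁ ∩ C₁, ∀ z₁ ∈ A₁ ∩ B₁,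
      ∀ x₂ ∈ B₂ ∩ C₂, ∀ y₂ ∈ A₂ ∩ C₂, ∀ z₂ ∈ A₂ ∩ B₂,
        ptOrient x₁ y₁ z₁ = ptOrient x₂ y₂ z₂ :=
  stmt_8_general A₁ A₂ B₁ B₂ C₁ C₂ hconv h1 h2 h3 e1 e2
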